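/- Let Y be a positive definite symmetric real 2×2 matrix. Then for i = 1, 2 one has m_i(Y⁻¹) = m_i(Y) / det Y. -/

import Mathlib

/-!
Since `Y⁻¹ = (det Y)⁻¹ • adj Y` and `pᵀ (adj Y) p = (J p)ᵀ Y (J p)` for the rotation
`J p = (-p₁, p₀)` in `GL₂(ℤ)`, the form of `Y⁻¹` is that of `Y` after an integral change of
variables, scaled by `(det Y)⁻¹ > 0`. Both minima are invariant under such changes of variables
and scale linearly.
-/
open Matrix Pointwise

/-- The integral quadratic form attached to a real 2×2 matrix `Y`: `p ↦ pᵀ Y p`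
for integer vectors `p ∈ ℤ²`. -/
noncomputable def quadForm (Y : Matrix (Fin 2) (Fin 2) ℝ) (p : Fin 2 → ℤ) : ℝ :=
  (fun i => (p i : ℝ)) ⬝ᵥ Y.mulVec (fun i => (p i : ℝ))

/-- The first consecutive minimum `m₁(Y)`: the infimum (minimum) of `pᵀYp` over nonzero
integer vectors `p`. -/
noncomputable def m1 (Y : Matrix (Fin 2) (Fin 2) ℝ) : ℝ :=
  sInf {r : ℝ | ∃ p : Fin 2 → ℤ, p ≠ 0 ∧ quadForm Y p = r}

/-- The second consecutive minimum `m₂(Y)`: the infimum (minimum) of `qᵀYq` over integer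
vectors `q` linearly independent of a vector `p` attaining `m₁(Y)` (the value does not
depend on the choice of such `p`). -/
noncomputable def m2 (Y : Matrix (Fin 2) (Fin 2) ℝ) : ℝ :=
  sInf {r : ℝ | ∃ p q : Fin 2 → ℤ, p ≠ 0 ∧ quadForm Y p = m1 Y ∧
    LinearIndependent ℤ ![p, q] ∧ quadForm Y q = r}

def rotate : (Fin 2 → ℤ) ≃ₗ[ℤ] (Fin 2 → ℤ) where
  toFun p := ![-p 1, p 0]
  invFun p := ![p 1, -p 0]
  map_add' p q := by funext i; fin_cases i <;> simp [add_comm]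
  map_smul' c p := by funext i; fin_cases i <;> simp
  left_inv p := by funext i; fin_cases i <;> simp
  right_inv p := by funext i; fin_cases i <;> simp

lemma quadForm_smul (c : ℝ) (Y : Matrix (Fin 2) (Fin 2) ℝ) (p : Fin 2 → ℤ) :
    quadForm (c • Y) p = c * quadForm Y p := by
  simp only [quadForm, smul_mulVec, dotProduct_smul, smul_eq_mul]

lemma quadForm_adjugate (Y : Matrix (Fin 2) (Fin 2) ℝ) (p : Fin 2 → ℤ) :
    quadForm Y.adjugate p = quadForm Y (rotate p) := by
  simp only [quadForm, dotProduct, mulVec, adjugate_fin_two, of_apply, cons_val', cons_val_fin_one,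
    Fin.sum_univ_two, cons_val_zero, cons_val_one, rotate, LinearEquiv.coe_mk, LinearMap.coe_mk,
    AddHom.coe_mk, Int.cast_neg]
  ring

lemma quadForm_inv (Y : Matrix (Fin 2) (Fin 2) ℝ) (p : Fin 2 → ℤ) :
    quadForm Y⁻¹ p = Y.det⁻¹ * quadForm Y (rotate p) := by
  rw [inv_def, Ring.inverse_eq_inv', quadForm_smul, quadForm_adjugate]

lemma linearIndependent_pair_map_iff (e : (Fin 2 → ℤ) ≃ₗ[ℤ] (Fin 2 → ℤ)) (p q : Fin 2 → ℤ) :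
    LinearIndependent ℤ ![e p, e q] ↔ LinearIndependent ℤ ![p, q] := by
  have : ![e p, e q] = e ∘ ![p, q] := by funext i; fin_cases i <;> rfl
  rw [this]
  exact e.toLinearMap.linearIndependent_iff e.ker

section Transport

variable {Y Z : Matrix (Fin 2) (Fin 2) ℝ} {c : ℝ} {e : (Fin 2 → ℤ) ≃ₗ[ℤ] (Fin 2 → ℤ)}

lemma quadForm_eq_inv_mul_symm (hc : c ≠ 0) (h : ∀ p, quadForm Z p = c * quadForm Y (e p))
    (p : Fin 2 → ℤ) : quadForm Y p = c⁻¹ * quadForm Z (e.symm p) := by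
  rw [h, e.apply_symm_apply, inv_mul_cancel_left₀ hc]

lemma m1_values_subset_smul (h : ∀ p, quadForm Z p = c * quadForm Y (e p)) :
    {r : ℝ | ∃ p : Fin 2 → ℤ, p ≠ 0 ∧ quadForm Z p = r} ⊆
      c • {r : ℝ | ∃ p : Fin 2 → ℤ, p ≠ 0 ∧ quadForm Y p = r} := by
  rintro _ ⟨p, hp, rfl⟩
  exact ⟨_, ⟨e p, e.map_ne_zero_iff.mpr hp, rfl⟩, (h p).symm⟩

lemma m1_eq_mul_of_quadForm_eq (hc : 0 < c) (h : ∀ p, quadForm Z p = c * quadForm Y (e p)) :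
    m1 Z = c * m1 Y := by
  have hback := m1_values_subset_smul (quadForm_eq_inv_mul_symm hc.ne' h)
  rw [m1, m1, ← smul_eq_mul, ← Real.sInf_smul_of_nonneg hc.le,
    (m1_values_subset_smul h).antisymm ((Set.smul_set_subset_iff₀ hc.ne').mpr hback)]

lemma m2_values_subset_smul (hc : c ≠ 0) (h : ∀ p, quadForm Z p = c * quadForm Y (e p))
    (hm1 : m1 Z = c * m1 Y) :
    {r : ℝ | ∃ p q : Fin 2 → ℤ, p ≠ 0 ∧ quadForm Z p = m1 Z ∧
        LinearIndependent ℤ ![p, q] ∧ quadForm Z q = r} ⊆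
      c • {r : ℝ | ∃ p q : Fin 2 → ℤ, p ≠ 0 ∧ quadForm Y p = m1 Y ∧
        LinearIndependent ℤ ![p, q] ∧ quadForm Y q = r} := by
  rintro _ ⟨p, q, hp, hmin, hli, rfl⟩
  refine ⟨_, ⟨e p, e q, e.map_ne_zero_iff.mpr hp, ?_,
    (linearIndependent_pair_map_iff e p q).mpr hli, rfl⟩, (h q).symm⟩
  rwa [h, hm1, mul_right_inj' hc] at hmin

lemma m2_eq_mul_of_quadForm_eq (hc : 0 < c) (h : ∀ p, quadForm Z p = c * quadForm Y (e p)) :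
    m2 Z = c * m2 Y := by
  have hm1 := m1_eq_mul_of_quadForm_eq hc h
  have hback := m2_values_subset_smul (inv_ne_zero hc.ne') (quadForm_eq_inv_mul_symm hc.ne' h)
    (by rw [hm1, inv_mul_cancel_left₀ hc.ne'])
  rw [m2, m2, ← smul_eq_mul, ← Real.sInf_smul_of_nonneg hc.le,
    (m2_values_subset_smul hc.ne' h hm1).antisymm ((Set.smul_set_subset_iff₀ hc.ne').mpr hback)]

end Transport

theorem stmt_5_general (Y : Matrix (Fin 2) (Fin 2) ℝ) (hpos : Y.PosDef) :
    m1 Y⁻¹ = m1 Y / Y.det ∧ m2 Y⁻¹ = m2 Y / Y.det := by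
  have hc : 0 < Y.det⁻¹ := inv_pos.mpr hpos.det_pos
  rw [div_eq_inv_mul, div_eq_inv_mul]
  exact ⟨m1_eq_mul_of_quadForm_eq hc (quadForm_inv Y), m2_eq_mul_of_quadForm_eq hc (quadForm_inv Y)⟩

/-- for a positive definite symmetric real 2×2 matrix `Y`, one has
`m_i(Y⁻¹) = m_i(Y) / det Y` for `i = 1, 2`. -/
theorem stmt_5 (Y : Matrix (Fin 2) (Fin 2) ℝ) (hsymm : Y.IsSymm) (hpos : Y.PosDef) :
    m1 Y⁻¹ = m1 Y / Y.det ∧ m2 Y⁻¹ = m2 Y / Y.det :=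
  stmt_5_general Y hpos
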